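/- Let G be a graph, M = M[IAS(G)], and X ⊆ V. Then c_G(X) < min{|X|, |V−X|} if and only if there is a k ≥ 1 such that τ_G(X) is a vertical k-separation of M. Moreover, if this is the case, then the smallest k for which τ_G(X) is a vertical k-separation of M is k = 2·c_G(X) + 1. -/

import Mathlib

open scoped ENat

variable {V : Type*} [Fintype V] [DecidableEq V]

/-- The column of the matrix `IAS(G) = (I | A | A+I)` indexed by `(v, i)`:
`i = 0` gives `φ(v)` (identity column), `i = 1` gives `χ(v)` (column of `A`),
`i = 2` gives `ψ(v)` (column of `A + I`). -/
def iasCol (A : Matrix V V (ZMod 2)) : V × Fin 3 → V → ZMod 2 :=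
  fun p w =>
    if p.2 = 0 then (if w = p.1 then 1 else 0)
    else if p.2 = 1 then A w p.1
    else A w p.1 + (if w = p.1 then 1 else 0)

/-- The rank of a subset of the ground set `W(G) = V × Fin 3` of the isotropic
matroid: the GF(2)-rank of the corresponding set of columns. -/
noncomputable def iasRank (A : Matrix V V (ZMod 2)) (S : Set (V × Fin 3)) : ℕ :=
  Module.finrank (ZMod 2) (Submodule.span (ZMod 2) (iasCol A '' S))

/-- The connectivity function `λ(S) = r(S) + r(W - S) - r(M)`. -/
noncomputable def iasLambda (A : Matrix V V (ZMod 2)) (S : Set (V × Fin 3)) : ℕ :=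
  iasRank A S + iasRank A Sᶜ - iasRank A Set.univ

/-- Independence in the isotropic matroid. -/
def iasIndep (A : Matrix V V (ZMod 2)) (S : Set (V × Fin 3)) : Prop :=
  LinearIndependent (ZMod 2) (fun s : S => iasCol A s.1)

/-- Circuits of the isotropic matroid: minimal dependent sets. -/
def iasCircuit (A : Matrix V V (ZMod 2)) (C : Set (V × Fin 3)) : Prop :=
  ¬ iasIndep A C ∧ ∀ S ⊂ C, iasIndep A S

/-- An ordinary `k`-separation: `λ(S) < k` and `|S|, |W - S| ≥ k`. -/
def OrdinarySep (A : Matrix V V (ZMod 2)) (k : ℕ) (S : Set (V × Fin 3)) : Prop :=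
  0 < k ∧ iasLambda A S < k ∧ k ≤ S.ncard ∧ k ≤ Sᶜ.ncard

/-- A cyclic `k`-separation: `λ(S) < k` and both `S` and `W - S` are dependent. -/
def CyclicSep (A : Matrix V V (ZMod 2)) (k : ℕ) (S : Set (V × Fin 3)) : Prop :=
  0 < k ∧ iasLambda A S < k ∧ ¬ iasIndep A S ∧ ¬ iasIndep A Sᶜ

/-- A vertical `k`-separation: `λ(S) < k` and `r(S), r(W - S) ≥ k`. -/
def VerticalSep (A : Matrix V V (ZMod 2)) (k : ℕ) (S : Set (V × Fin 3)) : Prop :=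
  0 < k ∧ iasLambda A S < k ∧ k ≤ iasRank A S ∧ k ≤ iasRank A Sᶜ

/-- `τ(M) = min {k : M has an ordinary k-separation}`, with `min ∅ = ∞`. -/
noncomputable def iasTau (A : Matrix V V (ZMod 2)) : ℕ∞ :=
  sInf {k : ℕ∞ | ∃ m : ℕ, (m : ℕ∞) = k ∧ ∃ S, OrdinarySep A m S}

/-- `κ*(M) = min ({k : M has a cyclic k-separation} ∪ {|W| - r(M)})`. -/
noncomputable def iasKappaStar (A : Matrix V V (ZMod 2)) : ℕ :=
  sInf ({k : ℕ | ∃ S, CyclicSep A k S} ∪ {3 * Fintype.card V - iasRank A Set.univ})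

/-- `κ(M) = min ({k : M has a vertical k-separation} ∪ {r(M)})`. -/
noncomputable def iasKappa (A : Matrix V V (ZMod 2)) : ℕ :=
  sInf ({k : ℕ | ∃ S, VerticalSep A k S} ∪ {iasRank A Set.univ})

/-- The simple graph underlying a looped simple graph given by its adjacency matrix. -/
def toSimpleGraph (A : Matrix V V (ZMod 2)) : SimpleGraph V where
  Adj v w := v ≠ w ∧ A v w = 1 ∧ A w v = 1
  symm := ⟨fun v w ⟨h1, h2, h3⟩ => ⟨Ne.symm h1, h3, h2⟩⟩
  loopless := ⟨fun v h => h.1 rfl⟩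

/-- The open neighborhood `N_G(v)`. -/
def nbhd (A : Matrix V V (ZMod 2)) (v : V) : Set V := {u | u ≠ v ∧ A v u = 1}

/-- `v` is a pendant vertex: `N_G(v) = {w}` for some `w`. -/
def IsPendant (A : Matrix V V (ZMod 2)) (v : V) : Prop := ∃ w, nbhd A v = {w}

/-- `G` has a pair of twin vertices: `v ≠ w` with `N_G(v) - {w} = N_G(w) - {v}`. -/
def HasTwins (A : Matrix V V (ZMod 2)) : Prop :=
  ∃ v w, v ≠ w ∧ nbhd A v \ {w} = nbhd A w \ {v}

/-- The cut-rank `c_G(X)`: the GF(2)-rank of the submatrix `A[V - X, X]`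
(columns indexed by `X`, rows indexed by `V - X`). -/
noncomputable def cutRank (A : Matrix V V (ZMod 2)) (X : Set V) : ℕ :=
  Module.finrank (ZMod 2)
    (Submodule.span (ZMod 2) ((fun x : V => fun w : ↥(Xᶜ) => A w.1 x) '' X))

/-- `τ_G(X) = ⋃_{x ∈ X} τ_G(x)`, the union of the vertex triples of members of `X`. -/
def tauSet (X : Set V) : Set (V × Fin 3) := {p | p.1 ∈ X}

/-- Loop complementation at `v`. -/
def loopComp (A : Matrix V V (ZMod 2)) (v : V) : Matrix V V (ZMod 2) :=
  fun x y => A x y + if x = v ∧ y = v then 1 else 0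

/-- Simple local complementation at `v`. -/
def simpleLocalComp (A : Matrix V V (ZMod 2)) (v : V) : Matrix V V (ZMod 2) :=
  fun x y => A x y +
    if x ≠ y ∧ (x ≠ v ∧ A v x = 1) ∧ (y ≠ v ∧ A v y = 1) then 1 else 0

/-- Non-simple local complementation at `v`. -/
def nonSimpleLocalComp (A : Matrix V V (ZMod 2)) (v : V) : Matrix V V (ZMod 2) :=
  fun x y => simpleLocalComp A v x y + if x = y ∧ x ≠ v ∧ A v x = 1 then 1 else 0

/-- One local move. -/
def LocalStep (A B : Matrix V V (ZMod 2)) : Prop :=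
  ∃ v, B = loopComp A v ∨ B = simpleLocalComp A v ∨ B = nonSimpleLocalComp A v

/-- Local equivalence: a finite sequence of loop complementations and
(simple or non-simple) local complementations. -/
def LocallyEquiv (A B : Matrix V V (ZMod 2)) : Prop :=
  Relation.ReflTransGen LocalStep A B

/-- `G` has a split: a bipartition `(V₁, V₂)` of `V` with `|V₁|, |V₂| ≥ 2` such that the
GF(2)-rank of `A[V₁, V₂]` is at most 1. -/
def HasSplit (A : Matrix V V (ZMod 2)) : Prop :=
  ∃ X : Set V, 2 ≤ X.ncard ∧ 2 ≤ Xᶜ.ncard ∧ cutRank A X ≤ 1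

/-- A transverse circuit: a circuit of the isotropic matroid meeting each
vertex triple at most once. -/
def IsTransverseCircuit (A : Matrix V V (ZMod 2)) (C : Set (V × Fin 3)) : Prop :=
  iasCircuit A C ∧ ∀ p ∈ C, ∀ q ∈ C, p.1 = q.1 → p = q

/-- An isotropic `k`-separation of `G`: `|X|, |V - X| ≥ k` and `c_G(X) < k`. -/
def IsotropicSep (A : Matrix V V (ZMod 2)) (k : ℕ) (X : Set V) : Prop :=
  k ≤ X.ncard ∧ k ≤ Xᶜ.ncard ∧ cutRank A X < k

/-- The isotropic connectivity `κ_B(G)`, with `min ∅ = ∞`. -/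
noncomputable def kappaB (A : Matrix V V (ZMod 2)) : ℕ∞ :=
  sInf {j : ℕ∞ | ∃ k : ℕ, (k : ℕ∞) = j ∧ ∃ X, IsotropicSep A k X}

/-- The 5-cycle `C₅`. -/
def C5mat : Matrix (Fin 5) (Fin 5) (ZMod 2) :=
  fun i j => if (i.val + 1) % 5 = j.val ∨ (j.val + 1) % 5 = i.val then 1 else 0

/-- The wheel `W₅` : a 5-cycle on `{0,…,4}` plus a hub `5` adjacent to all. -/
def W5mat : Matrix (Fin 6) (Fin 6) (ZMod 2) :=
  fun i j =>
    if (i.val = 5 ∧ j.val ≠ 5) ∨ (j.val = 5 ∧ i.val ≠ 5) then 1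
    else if i.val ≠ 5 ∧ j.val ≠ 5 ∧ ((i.val + 1) % 5 = j.val ∨ (j.val + 1) % 5 = i.val) then 1
    else 0

/-!
Projecting the columns of `τ(X)` onto the coordinates `V - X` kills exactly the span of the
identity columns `φ(x)`, `x ∈ X`, and maps the `χ`- and `ψ`-columns onto the columns of
`A[V - X, X]`; hence `r(τ(X)) = |X| + c(X)`. Symmetry of `A` gives `c(V - X) = c(X)`, and
`r(M) = |V|`, so `λ(τ(X)) = 2 c(X)`. Thus `τ(X)` is a vertical `k`-separation exactly when
`2 c(X) < k ≤ min(|X|, |V - X|) + c(X)`, a range that is nonempty iff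
`c(X) < min(|X|, |V - X|)` (recall `c(X) ≤ |X|, |V - X|`), and then starts at `2 c(X) + 1`.
-/

open Module Submodule

section RankNullity

variable {K M N : Type*} [DivisionRing K] [AddCommGroup M] [Module K M] [FiniteDimensional K M]
  [AddCommGroup N] [Module K N]

theorem LinearMap.finrank_map_add_finrank_ker_of_ker_le (f : M →ₗ[K] N) {W : Submodule K M}
    (h : LinearMap.ker f ≤ W) :
    finrank K (W.map f) + finrank K (LinearMap.ker f) = finrank K W := by
  rw [← (f.domRestrict W).finrank_range_add_finrank_ker, LinearMap.range_domRestrict,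
    LinearMap.ker_domRestrict, (comapSubtypeEquivOfLe h).finrank_eq]

end RankNullity

theorem Pi.ker_funLeft_compl {R ι : Type*} [CommRing R] [Finite ι] (s : Set ι) :
    LinearMap.ker (LinearMap.funLeft R R (Subtype.val : ↥sᶜ → ι)) = Pi.spanSubset R s := by
  ext f
  simp only [LinearMap.mem_ker, Pi.mem_spanSubset_iff, funext_iff, LinearMap.funLeft_apply,
    Pi.zero_apply, Subtype.forall, Set.mem_compl_iff]

omit [DecidableEq V] in
theorem cutRank_le_ncard (A : Matrix V V (ZMod 2)) (X : Set V) : cutRank A X ≤ X.ncard := by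
  classical
  calc cutRank A X ≤ Fintype.card X := by
        rw [cutRank, Set.image_eq_range]; exact finrank_range_le_card _
    _ = X.ncard := by rw [Fintype.card_eq_nat_card, Nat.card_coe_set_eq]

omit [DecidableEq V] in
theorem cutRank_le_ncard_compl (A : Matrix V V (ZMod 2)) (X : Set V) :
    cutRank A X ≤ Xᶜ.ncard := by
  classical
  calc cutRank A X ≤ finrank (ZMod 2) (↥Xᶜ → ZMod 2) := Submodule.finrank_le _
    _ = Xᶜ.ncard := by
      rw [Module.finrank_fintype_fun_eq_card, Fintype.card_eq_nat_card, Nat.card_coe_set_eq]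

omit [Fintype V] [DecidableEq V] in
theorem cutRank_eq_rank_submatrix (A : Matrix V V (ZMod 2)) (X : Set V)
    [Fintype X] [Fintype ↥Xᶜ] :
    cutRank A X = (A.submatrix ((↑) : ↥Xᶜ → V) ((↑) : X → V)).rank := by
  rw [Matrix.rank_eq_finrank_span_cols, cutRank, Set.image_eq_range]
  rfl

omit [DecidableEq V] in
theorem cutRank_compl (A : Matrix V V (ZMod 2)) (hA : A.IsSymm) (X : Set V) :
    cutRank A Xᶜ = cutRank A X := by
  classical
  rw [cutRank_eq_rank_submatrix, cutRank_eq_rank_submatrix, ← Matrix.rank_transpose,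
    Matrix.transpose_submatrix, hA.eq]
  have h := (A.submatrix ((↑) : ↥Xᶜ → V) ((↑) : X → V)).rank_submatrix (Equiv.refl _)
    (Equiv.setCongr (compl_compl X))
  convert h using 2
  ext i j
  rfl

theorem iasCol_zero (A : Matrix V V (ZMod 2)) (v : V) :
    iasCol A (v, 0) = Pi.basisFun (ZMod 2) V v := by
  ext w
  simp [iasCol, Pi.single_apply]

omit [Fintype V] in
theorem iasCol_apply_of_ne (A : Matrix V V (ZMod 2)) {v w : V} (h : w ≠ v) (i : Fin 3) :
    iasCol A (v, i) w = if i = 0 then 0 else A w v := by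
  fin_cases i <;> simp [iasCol, h]

theorem iasRank_tauSet (A : Matrix V V (ZMod 2)) (X : Set V) :
    iasRank A (tauSet X) = X.ncard + cutRank A X := by
  set P := LinearMap.funLeft (ZMod 2) (ZMod 2) (Subtype.val : ↥Xᶜ → V)
  have hker : LinearMap.ker P ≤ span (ZMod 2) (iasCol A '' tauSet X) := by
    rw [Pi.ker_funLeft_compl]
    exact span_mono (by rintro _ ⟨v, hv, rfl⟩; exact ⟨(v, 0), hv, iasCol_zero A v⟩)
  have hmap : (span (ZMod 2) (iasCol A '' tauSet X)).map P =
      span (ZMod 2) ((fun x (w : ↥Xᶜ) => A w x) '' X) := by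
    rw [map_span, Set.image_image]
    apply le_antisymm
    · rw [span_le]
      rintro _ ⟨⟨v, i⟩, hv, rfl⟩
      have hP : P (iasCol A (v, i)) = if i = 0 then 0 else fun w : ↥Xᶜ => A w v := by
        ext w
        have hwv : (w : V) ≠ v := fun h => w.2 (h ▸ hv)
        split_ifs <;> simp_all [P, iasCol_apply_of_ne A hwv]
      change P (iasCol A (v, i)) ∈ _
      rw [hP]
      split_ifs
      · exact zero_mem _
      · exact subset_span ⟨v, hv, rfl⟩
    · exact span_mono (by rintro _ ⟨v, hv, rfl⟩; exact ⟨(v, 1), hv, by ext w; simp [P, iasCol]⟩)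
  rw [iasRank, ← P.finrank_map_add_finrank_ker_of_ker_le hker, hmap, Pi.ker_funLeft_compl,
    Pi.dim_spanSubset, cutRank, add_comm]

omit [Fintype V] [DecidableEq V] in
theorem tauSet_compl (X : Set V) : (tauSet X)ᶜ = tauSet Xᶜ := rfl

theorem iasRank_univ (A : Matrix V V (ZMod 2)) : iasRank A Set.univ = Fintype.card V := by
  have hcut : cutRank A Set.univ = 0 := by
    simpa using cutRank_le_ncard_compl A Set.univ
  have huniv : tauSet (Set.univ : Set V) = Set.univ := Set.eq_univ_of_forall fun _ => trivial
  simpa [huniv, hcut, Set.ncard_univ] using iasRank_tauSet A Set.univ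

theorem iasRank_compl_tauSet (A : Matrix V V (ZMod 2)) (hA : A.IsSymm) (X : Set V) :
    iasRank A (tauSet X)ᶜ = Xᶜ.ncard + cutRank A X := by
  rw [tauSet_compl, iasRank_tauSet, cutRank_compl A hA]

theorem iasLambda_tauSet (A : Matrix V V (ZMod 2)) (hA : A.IsSymm) (X : Set V) :
    iasLambda A (tauSet X) = 2 * cutRank A X := by
  have hcard : X.ncard + Xᶜ.ncard = Fintype.card V := by
    rw [Set.ncard_add_ncard_compl, Nat.card_eq_fintype_card]
  rw [iasLambda, iasRank_tauSet, iasRank_compl_tauSet A hA, iasRank_univ]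
  omega

theorem verticalSep_tauSet_iff (A : Matrix V V (ZMod 2)) (hA : A.IsSymm) (X : Set V) (k : ℕ) :
    VerticalSep A k (tauSet X) ↔ 0 < k ∧ 2 * cutRank A X < k ∧
      k ≤ X.ncard + cutRank A X ∧ k ≤ Xᶜ.ncard + cutRank A X := by
  rw [VerticalSep, iasLambda_tauSet A hA, iasRank_tauSet, iasRank_compl_tauSet A hA]

theorem stmt4 (A : Matrix V V (ZMod 2)) (hA : A.IsSymm) (X : Set V) :
    (cutRank A X < min X.ncard Xᶜ.ncard ↔
      ∃ k : ℕ, 1 ≤ k ∧ VerticalSep A k (tauSet X)) ∧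
    (cutRank A X < min X.ncard Xᶜ.ncard →
      IsLeast {k : ℕ | VerticalSep A k (tauSet X)} (2 * cutRank A X + 1)) := by
  have hX := cutRank_le_ncard A X
  have hXc := cutRank_le_ncard_compl A X
  simp only [lt_min_iff, verticalSep_tauSet_iff A hA, IsLeast, lowerBounds, Set.mem_ofPred_eq]
  exact ⟨⟨fun h => ⟨2 * cutRank A X + 1, by omega, by omega⟩, fun ⟨k, _, hk⟩ => by omega⟩,
    fun h => ⟨by omega, fun k hk => by omega⟩⟩
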